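/- arXiv:1402.1298 — 3 statements merged into one kernel-verified Lean document; each statement's English description precedes it below -/
import Mathlib

section
/- The V-derivative of the log local partition function: fix y ∈ ℝ and define Z(ω,V) = (2πV)^{-1/2} ∫ p(y,z) e^{-(z-ω)²/(2V)} dz for ω ∈ ℝ, V > 0. Assume 0 < ∫ p(y,z) e^{-(z-ω)²/(2V)} dz < ∞ and ∫ (1 + |z| + z²) p(y,z) e^{-(z-ω)²/(2V)} dz < ∞ for all ω and V > 0, with local domination in (ω,V) justifying differentiation under the integral sign. Then ∂/∂V log Z(ω,V) = ½ ( g_out(ω,y,V)² + ∂_ω g_out(ω,y,V) ) for all ω ∈ ℝ and V > 0. -/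
/-!
With `I(ω, V) = ∫ p(y,z) e^{-(z-ω)²/(2V)} dz` we have `log Z = log I - ½ log (2πV)`, so
`∂_V log Z = ∂_V I / I - 1/(2V)`. Differentiating under the integral sign expresses `∂_V I`,
`∂_ω I` and the `ω`-derivative of the numerator of `g_out` through the Gaussian moments
`M_k = ∫ (z-ω)^k p(y,z) e^{-(z-ω)²/(2V)} dz`, `k = 0, 1, 2`; the claimed identity is then the
quotient rule for `g_out = M₁ / (V M₀)` followed by algebra. Splitting the `ω`-derivative of the
numerator into `M₂ / V - M₀` needs `M₀` and `M₂` to be finite; both integrands are dominated by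
the weight `1 + |z| + z²`.
-/

open MeasureTheory

/-- The output function `g_out(ω, y, V)` of a generalized-linear output channel with
density `p(y,z)`. -/
noncomputable def gout (p : ℝ → ℝ → ℝ) (ω y V : ℝ) : ℝ :=
  (∫ z, (z - ω) * p y z * Real.exp (-(z - ω) ^ 2 / (2 * V))) /
    (V * ∫ z, p y z * Real.exp (-(z - ω) ^ 2 / (2 * V)))

namespace MeasureTheory

theorem Integrable.mul_of_abs_le_mul_weight {α : Type*} [MeasurableSpace α] {μ : Measure α}
    {f g w : α → ℝ} {C : ℝ} (hwf : Integrable (fun x => w x * f x) μ) (hw : ∀ x, 0 < w x)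
    (hw_meas : Measurable w) (hg : Measurable g) (hgw : ∀ x, |g x| ≤ C * w x) :
    Integrable (fun x => g x * f x) μ := by
  have hsplit : (fun x => g x * f x) = fun x => g x / w x * (w x * f x) := by
    funext x
    field_simp [(hw x).ne']
  rw [hsplit]
  refine hwf.bdd_mul (c := C) (hg.div hw_meas).aestronglyMeasurable (ae_of_all _ fun x => ?_)
  rw [Real.norm_eq_abs, abs_div, abs_of_pos (hw x)]
  exact (div_le_iff₀ (hw x)).2 (hgw x)

section OneAddAbsAddSq

variable {μ : Measure ℝ} {f : ℝ → ℝ}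

theorem Integrable.of_one_add_abs_add_sq_mul
    (hf : Integrable (fun z => (1 + |z| + z ^ 2) * f z) μ) : Integrable f μ := by
  simpa using hf.mul_of_abs_le_mul_weight (g := fun _ => 1) (C := 1) (fun z => by positivity)
    (by fun_prop) measurable_const fun z => by
      rw [abs_one, one_mul]; linarith [abs_nonneg z, sq_nonneg z]

theorem Integrable.sub_sq_mul_of_one_add_abs_add_sq_mul
    (hf : Integrable (fun z => (1 + |z| + z ^ 2) * f z) μ) (c : ℝ) :
    Integrable (fun z => (z - c) ^ 2 * f z) μ := by
  refine hf.mul_of_abs_le_mul_weight (C := 2 + 2 * c ^ 2) (fun z => by positivity) (by fun_prop)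
    (by fun_prop) fun z => ?_
  rw [abs_of_nonneg (sq_nonneg _)]
  nlinarith [sq_nonneg (z + c), abs_nonneg z, sq_abs z, sq_nonneg c]

end OneAddAbsAddSq

end MeasureTheory

theorem HasDerivAt.log_inv_sqrt_mul {I : ℝ → ℝ} {I' a V : ℝ} (hI : HasDerivAt I I' V)
    (hIV : I V ≠ 0) (ha : 0 < a) (hV : 0 < V) :
    HasDerivAt (fun v => Real.log ((Real.sqrt (a * v))⁻¹ * I v)) (I' / I V - 1 / (2 * V)) V := by
  have hlog_eq : (fun v => Real.log (I v) - Real.log (a * v) / 2)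
      =ᶠ[nhds V] fun v => Real.log ((Real.sqrt (a * v))⁻¹ * I v) := by
    filter_upwards [eventually_gt_nhds hV, hI.continuousAt.eventually_ne hIV] with v hv hIv
    have hav : 0 < a * v := by positivity
    rw [Real.log_mul (by positivity) hIv, Real.log_inv, Real.log_sqrt hav.le]
    ring
  have hlin : HasDerivAt (fun v => a * v) a V := by
    simpa using (hasDerivAt_id V).const_mul a
  refine ((hI.log hIV).sub ((hlin.log (by positivity)).div_const 2)).congr_of_eventuallyEq
    hlog_eq.symm |>.congr_deriv ?_
  field_simp

theorem half_sq_add_quotient_deriv_eq {V Z N M : ℝ} (hV : V ≠ 0) (hZ : Z ≠ 0) :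
    1 / 2 * ((N / (V * Z)) ^ 2 + ((M / V - Z) * (V * Z) - N * (V * (N / V))) / (V * Z) ^ 2) =
      M / (2 * V ^ 2) / Z - 1 / (2 * V) := by
  field_simp
  ring

theorem deriv_V_log_Z_general (p : ℝ → ℝ → ℝ) (y : ℝ)
    (hZpos : ∀ (ω V : ℝ), 0 < V → 0 < ∫ z, p y z * Real.exp (-(z - ω) ^ 2 / (2 * V)))
    (hmom : ∀ (ω V : ℝ), 0 < V →
      Integrable (fun z => (1 + |z| + z ^ 2) * (p y z * Real.exp (-(z - ω) ^ 2 / (2 * V)))))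
    (hDUIden : ∀ (ω V : ℝ), 0 < V →
      HasDerivAt (fun w => ∫ z, p y z * Real.exp (-(z - w) ^ 2 / (2 * V)))
        (∫ z, p y z * Real.exp (-(z - ω) ^ 2 / (2 * V)) * ((z - ω) / V)) ω)
    (hDUInum : ∀ (ω V : ℝ), 0 < V →
      HasDerivAt (fun w => ∫ z, (z - w) * p y z * Real.exp (-(z - w) ^ 2 / (2 * V)))
        (∫ z, p y z * Real.exp (-(z - ω) ^ 2 / (2 * V)) * ((z - ω) ^ 2 / V - 1)) ω)
    (hDUIV : ∀ (ω V : ℝ), 0 < V →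
      HasDerivAt (fun v => ∫ z, p y z * Real.exp (-(z - ω) ^ 2 / (2 * v)))
        (∫ z, p y z * Real.exp (-(z - ω) ^ 2 / (2 * V)) * ((z - ω) ^ 2 / (2 * V ^ 2))) V) :
    ∀ (ω V : ℝ), 0 < V →
      HasDerivAt
        (fun v => Real.log
          ((Real.sqrt (2 * Real.pi * v))⁻¹ * ∫ z, p y z * Real.exp (-(z - ω) ^ 2 / (2 * v))))
        ((1 / 2) * ((gout p ω y V) ^ 2 + deriv (fun w => gout p w y V) ω)) V := by
  intro ω V hV
  set E : ℝ → ℝ := fun z => p y z * Real.exp (-(z - ω) ^ 2 / (2 * V))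
  have hE : Integrable E := (hmom ω V hV).of_one_add_abs_add_sq_mul
  have hE₂ : Integrable fun z => (z - ω) ^ 2 * E z :=
    (hmom ω V hV).sub_sq_mul_of_one_add_abs_add_sq_mul ω
  have hZ : (∫ z, E z) ≠ 0 := (hZpos ω V hV).ne'
  have hden_deriv : ∫ z, E z * ((z - ω) / V) =
      (∫ z, (z - ω) * p y z * Real.exp (-(z - ω) ^ 2 / (2 * V))) / V := by
    rw [← integral_div]; congr 1 with z; ring
  have hnum_deriv :
      ∫ z, E z * ((z - ω) ^ 2 / V - 1) = (∫ z, (z - ω) ^ 2 * E z) / V - ∫ z, E z := by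
    rw [← integral_div, ← integral_sub (hE₂.div_const V) hE]; congr 1 with z; ring
  have hV_deriv : ∫ z, E z * ((z - ω) ^ 2 / (2 * V ^ 2)) =
      (∫ z, (z - ω) ^ 2 * E z) / (2 * V ^ 2) := by
    rw [← integral_div]; congr 1 with z; ring
  have hgout : HasDerivAt (fun w => gout p w y V) _ ω :=
    (hDUInum ω V hV).div ((hDUIden ω V hV).const_mul V) (mul_ne_zero hV.ne' hZ)
  have hlogZ := (hDUIV ω V hV).log_inv_sqrt_mul hZ (a := 2 * Real.pi) (by positivity) hV
  rw [hden_deriv, hnum_deriv] at hgout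
  rw [hV_deriv] at hlogZ
  refine hlogZ.congr_deriv ?_
  rw [hgout.deriv]
  exact (half_sq_add_quotient_deriv_eq hV.ne' hZ).symm

/-- The `V`-derivative of the log local partition function
`Z(ω,V) = (2πV)^{-1/2} ∫ p(y,z) e^{-(z-ω)²/(2V)} dz`:
`∂_V log Z(ω,V) = ½ (g_out(ω,y,V)² + ∂_ω g_out(ω,y,V))`. -/
theorem deriv_V_log_Z (p : ℝ → ℝ → ℝ) (hp : Measurable (Function.uncurry p))
    (hpnn : ∀ y z, 0 ≤ p y z) (y : ℝ)
    (hZpos : ∀ (ω V : ℝ), 0 < V → 0 < ∫ z, p y z * Real.exp (-(z - ω) ^ 2 / (2 * V)))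
    (hmom : ∀ (ω V : ℝ), 0 < V →
      Integrable (fun z => (1 + |z| + z ^ 2) * (p y z * Real.exp (-(z - ω) ^ 2 / (2 * V)))))
    (hDUIden : ∀ (ω V : ℝ), 0 < V →
      HasDerivAt (fun w => ∫ z, p y z * Real.exp (-(z - w) ^ 2 / (2 * V)))
        (∫ z, p y z * Real.exp (-(z - ω) ^ 2 / (2 * V)) * ((z - ω) / V)) ω)
    (hDUInum : ∀ (ω V : ℝ), 0 < V →
      HasDerivAt (fun w => ∫ z, (z - w) * p y z * Real.exp (-(z - w) ^ 2 / (2 * V)))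
        (∫ z, p y z * Real.exp (-(z - ω) ^ 2 / (2 * V)) * ((z - ω) ^ 2 / V - 1)) ω)
    (hDUIV : ∀ (ω V : ℝ), 0 < V →
      HasDerivAt (fun v => ∫ z, p y z * Real.exp (-(z - ω) ^ 2 / (2 * v)))
        (∫ z, p y z * Real.exp (-(z - ω) ^ 2 / (2 * V)) * ((z - ω) ^ 2 / (2 * V ^ 2))) V) :
    ∀ (ω V : ℝ), 0 < V →
      HasDerivAt
        (fun v => Real.log
          ((Real.sqrt (2 * Real.pi * v))⁻¹ * ∫ z, p y z * Real.exp (-(z - ω) ^ 2 / (2 * v))))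
        ((1 / 2) * ((gout p ω y V) ^ 2 + deriv (fun w => gout p w y V) ω)) V :=
  deriv_V_log_Z_general p y hZpos hmom hDUIden hDUInum hDUIV
end

section
/- Zero-mean property of the output function under the correct data distribution: fix ω ∈ ℝ and V > 0. Assume that for every z ∈ ℝ, ∫ p(y,z) dy = 1 (each p(·,z) is a probability density), and let q(y) = ∫ p(y,z) φ_V(z-ω) dz be the marginal density of the data, where φ_V(u) = (2πV)^{-1/2} e^{-u²/(2V)}. Assume q(y) ∈ (0,∞) for every y. Then y ↦ g_out(ω, y, V) q(y) is integrable and ∫ g_out(ω, y, V) q(y) dy = 0; that is, the expectation of g_out(ω, Y, V) vanishes when Y is drawn from the true marginal q. -/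
open MeasureTheory

/-!
The normalisations of `q` and of `g_out` cancel, so `g_out(ω, y, V) q(y)` is, up to the constant
`(2πV)^{-1/2} / V`, the numerator `∫ (z - ω) p(y,z) e^{-(z-ω)²/(2V)} dz`. Integrating it over `y`
and exchanging the order of integration (Fubini, justified because each `p(·,z)` has mass one and
`|z - ω| e^{-(z-ω)²/(2V)}` is integrable) leaves `∫ (z - ω) e^{-(z-ω)²/(2V)} dz`, which vanishes
because the integrand is odd about `ω`.
-/

theorem integral_eq_zero_of_odd {G E : Type*} [MeasurableSpace G] [AddGroup G] [MeasurableNeg G]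
    [NormedAddCommGroup E] [NormedSpace ℝ E] {f : G → E} (hf : Function.Odd f) (μ : Measure G)
    [μ.IsNegInvariant] : ∫ x, f x ∂μ = 0 := by
  have h := integral_neg_eq_self f μ
  simp only [hf _, integral_neg] at h
  have h2 : (2 : ℝ) • ∫ x, f x ∂μ = 0 := by
    rw [two_smul]
    nth_rewrite 1 [← h]
    exact neg_add_cancel _
  exact (smul_eq_zero.mp h2).resolve_left two_ne_zero

section MarkovDensity

variable {α β : Type*} [MeasurableSpace α] [MeasurableSpace β] {μ : Measure α} {ν : Measure β}
  [SFinite μ] [SFinite ν] {p : α → β → ℝ} {h : β → ℝ}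

theorem integrable_prod_mul_of_integral_eq_one
    (hp : AEStronglyMeasurable (Function.uncurry p) (μ.prod ν)) (hpnn : ∀ y z, 0 ≤ p y z)
    (hp_int : ∀ z, Integrable (fun y => p y z) μ) (hp_one : ∀ z, ∫ y, p y z ∂μ = 1)
    (hh : Integrable h ν) :
    Integrable (fun w : α × β => h w.2 * p w.1 w.2) (μ.prod ν) := by
  have hmeas : AEStronglyMeasurable (fun w : α × β => h w.2 * p w.1 w.2) (μ.prod ν) :=
    hh.aestronglyMeasurable.comp_snd.mul hp
  rw [integrable_prod_iff' hmeas]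
  refine ⟨ae_of_all _ fun z => (hp_int z).const_mul (h z), hh.norm.congr (ae_of_all _ fun z => ?_)⟩
  simp only [norm_mul, Real.norm_eq_abs, abs_of_nonneg (hpnn _ z)]
  rw [integral_const_mul, hp_one, mul_one]

theorem integral_integral_mul_of_integral_eq_one
    (hp : AEStronglyMeasurable (Function.uncurry p) (μ.prod ν)) (hpnn : ∀ y z, 0 ≤ p y z)
    (hp_int : ∀ z, Integrable (fun y => p y z) μ) (hp_one : ∀ z, ∫ y, p y z ∂μ = 1)
    (hh : Integrable h ν) :
    ∫ y, ∫ z, h z * p y z ∂ν ∂μ = ∫ z, h z ∂ν := by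
  rw [integral_integral_swap (integrable_prod_mul_of_integral_eq_one hp hpnn hp_int hp_one hh)]
  simp only [integral_const_mul, hp_one, mul_one]

end MarkovDensity

theorem integrable_sub_mul_exp_neg_sq_div (ω : ℝ) {V : ℝ} (hV : 0 < V) :
    Integrable fun z : ℝ => (z - ω) * Real.exp (-(z - ω) ^ 2 / (2 * V)) := by
  have h := (integrable_mul_exp_neg_mul_sq (b := (2 * V)⁻¹) (by positivity)).comp_sub_right ω
  refine h.congr (ae_of_all _ fun z => ?_)
  dsimp only
  congr 2
  field_simp

theorem integral_sub_mul_exp_neg_sq_div (ω V : ℝ) :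
    ∫ z : ℝ, (z - ω) * Real.exp (-(z - ω) ^ 2 / (2 * V)) = 0 := by
  rw [integral_sub_right_eq_self (fun u => u * Real.exp (-u ^ 2 / (2 * V))) ω]
  exact integral_eq_zero_of_odd (fun u => by simp only [neg_sq, neg_mul]) volume

theorem gout_mul_const_mul_eq (p : ℝ → ℝ → ℝ) (ω y c : ℝ) {V : ℝ} (hV : V ≠ 0)
    (hD : ∫ z, p y z * Real.exp (-(z - ω) ^ 2 / (2 * V)) ≠ 0) :
    gout p ω y V * (c * ∫ z, p y z * Real.exp (-(z - ω) ^ 2 / (2 * V))) =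
      c / V * ∫ z, (z - ω) * Real.exp (-(z - ω) ^ 2 / (2 * V)) * p y z := by
  have hnum : ∫ z, (z - ω) * p y z * Real.exp (-(z - ω) ^ 2 / (2 * V)) =
      ∫ z, (z - ω) * Real.exp (-(z - ω) ^ 2 / (2 * V)) * p y z :=
    integral_congr_ae (ae_of_all _ fun z => mul_right_comm _ _ _)
  rw [gout, hnum]
  generalize ∫ z, (z - ω) * Real.exp (-(z - ω) ^ 2 / (2 * V)) * p y z = N at *
  generalize ∫ z, p y z * Real.exp (-(z - ω) ^ 2 / (2 * V)) = D at *
  field_simp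

theorem gout_zero_mean_general (p : ℝ → ℝ → ℝ) (hp : Measurable (Function.uncurry p))
    (hpnn : ∀ y z, 0 ≤ p y z) (ω V : ℝ) (hV : 0 < V)
    (hchan_int : ∀ z : ℝ, Integrable (fun y => p y z))
    (hchan : ∀ z : ℝ, ∫ y, p y z = 1)
    (q : ℝ → ℝ)
    (hq : ∀ y, q y = ∫ z, p y z *
        ((Real.sqrt (2 * Real.pi * V))⁻¹ * Real.exp (-(z - ω) ^ 2 / (2 * V))))
    (hq_pos : ∀ y, 0 < q y) :
    Integrable (fun y => gout p ω y V * q y) ∧ ∫ y, gout p ω y V * q y = 0 := by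
  set c := (Real.sqrt (2 * Real.pi * V))⁻¹
  have hq_eq : ∀ y, q y = c * ∫ z, p y z * Real.exp (-(z - ω) ^ 2 / (2 * V)) := fun y => by
    rw [hq y, ← integral_const_mul]
    exact integral_congr_ae (ae_of_all _ fun z => mul_left_comm _ _ _)
  have hmean : (fun y => gout p ω y V * q y) =
      fun y => c / V * ∫ z, (z - ω) * Real.exp (-(z - ω) ^ 2 / (2 * V)) * p y z := by
    funext y
    have hD : ∫ z, p y z * Real.exp (-(z - ω) ^ 2 / (2 * V)) ≠ 0 := fun h0 => by
      simpa [hq_eq y, h0] using hq_pos y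
    rw [hq_eq y, gout_mul_const_mul_eq p ω y c hV.ne' hD]
  have hh := integrable_sub_mul_exp_neg_sq_div ω hV
  refine ⟨?_, ?_⟩
  · rw [hmean]
    exact (integrable_prod_mul_of_integral_eq_one hp.aestronglyMeasurable hpnn hchan_int hchan
      hh).integral_prod_left.const_mul _
  · rw [hmean, integral_const_mul, integral_integral_mul_of_integral_eq_one hp.aestronglyMeasurable
      hpnn hchan_int hchan hh, integral_sub_mul_exp_neg_sq_div, mul_zero]

/-- Zero-mean property of the output function under the correct data distribution: if each
`p(·,z)` is a probability density and `q(y) = ∫ p(y,z) φ_V(z-ω) dz` is the marginal density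
of the data (assumed positive and finite), then `y ↦ g_out(ω,y,V) q(y)` is integrable and
`∫ g_out(ω, y, V) q(y) dy = 0`. -/
theorem gout_zero_mean (p : ℝ → ℝ → ℝ) (hp : Measurable (Function.uncurry p))
    (hpnn : ∀ y z, 0 ≤ p y z) (ω V : ℝ) (hV : 0 < V)
    (hchan_int : ∀ z : ℝ, Integrable (fun y => p y z))
    (hchan : ∀ z : ℝ, ∫ y, p y z = 1)
    (q : ℝ → ℝ)
    (hq : ∀ y, q y = ∫ z, p y z *
        ((Real.sqrt (2 * Real.pi * V))⁻¹ * Real.exp (-(z - ω) ^ 2 / (2 * V))))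
    (hq_fin : ∀ y : ℝ, Integrable (fun z => p y z *
        ((Real.sqrt (2 * Real.pi * V))⁻¹ * Real.exp (-(z - ω) ^ 2 / (2 * V)))))
    (hq_pos : ∀ y, 0 < q y) :
    Integrable (fun y => gout p ω y V * q y) ∧ ∫ y, gout p ω y V * q y = 0 :=
  gout_zero_mean_general p hp hpnn ω V hV hchan_int hchan q hq hq_pos
end

section
/- Output Nishimori condition: fix ω ∈ ℝ and V > 0. Assume that for every z ∈ ℝ, ∫ p(y,z) dy = 1, let q(y) = ∫ p(y,z) φ_V(z-ω) dz where φ_V(u) = (2πV)^{-1/2} e^{-u²/(2V)}, and assume q(y) ∈ (0,∞) for every y. Assume moreover that for every y, ∫ (1 + |z| + z²) p(y,z) e^{-(z-ω')²/(2V)} dz < ∞ for all ω' with local domination in ω' justifying differentiation under the integral sign (so that ∂_ω g_out exists and the posterior second-moment identity holds). Then ∫ (−∂_ω g_out(ω, y, V)) q(y) dy = ∫ g_out(ω, y, V)² q(y) dy; that is, under the true data distribution the expectation of −∂_ω g_out equals the expectation of g_out². -/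
/-!
Write `D(w) = ∫ p(y,z) e^{-(z-w)²/(2V)} dz` and `N(w) = ∫ (z-w) p(y,z) e^{-(z-w)²/(2V)} dz`,
so that `g_out = N / (V D)` and `D' = N / V`. The quotient rule then gives
`∂_ω g_out = N'(ω) / (V D(ω)) - g_out²`, and as `q = D(ω) / √(2πV)` the claim reduces to
`∫ N'(ω) dy = 0`. By Fubini and `∫ p(y,z) dy = 1` this integral equals
`∫ e^{-u²/(2V)} (u²/V - 1) du`, which vanishes because the integrand is the derivative of
`-u e^{-u²/(2V)}`.
-/

open MeasureTheory

open Real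

lemma integral_add_eq_of_integral_eq_zero {α E : Type*} [MeasurableSpace α] {μ : Measure α}
    [NormedAddCommGroup E] [NormedSpace ℝ E] {f g : α → E} (hg : Integrable g μ)
    (hg_zero : ∫ a, g a ∂μ = 0) :
    ∫ a, f a + g a ∂μ = ∫ a, f a ∂μ := by
  by_cases hf : Integrable f μ
  · rw [integral_add hf hg, hg_zero, add_zero]
  · rw [integral_undef hf, integral_undef fun hfg =>
      hf ((hfg.sub hg).congr (ae_of_all _ fun a => add_sub_cancel_right (f a) (g a)))]

section Gaussian

variable {V : ℝ}

lemma exp_neg_sq_div_eq (V u : ℝ) : exp (-u ^ 2 / (2 * V)) = exp (-(2 * V)⁻¹ * u ^ 2) := by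
  congr 1; ring

lemma integrable_exp_neg_sq_div (hV : 0 < V) :
    Integrable fun u : ℝ => exp (-u ^ 2 / (2 * V)) := by
  simpa only [exp_neg_sq_div_eq] using integrable_exp_neg_mul_sq (b := (2 * V)⁻¹) (by positivity)

lemma integrable_mul_exp_neg_sq_div (hV : 0 < V) :
    Integrable fun u : ℝ => u * exp (-u ^ 2 / (2 * V)) := by
  simpa only [exp_neg_sq_div_eq] using
    integrable_mul_exp_neg_mul_sq (b := (2 * V)⁻¹) (by positivity)

lemma integrable_sq_mul_exp_neg_sq_div (hV : 0 < V) :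
    Integrable fun u : ℝ => u ^ 2 * exp (-u ^ 2 / (2 * V)) := by
  have h := integrable_rpow_mul_exp_neg_mul_sq (b := (2 * V)⁻¹) (by positivity) (s := 2)
    (by norm_num)
  simp only [rpow_two] at h
  simpa only [exp_neg_sq_div_eq] using h

lemma integrable_exp_neg_sq_div_mul_sq_div_sub_one (hV : 0 < V) :
    Integrable fun u : ℝ => exp (-u ^ 2 / (2 * V)) * (u ^ 2 / V - 1) := by
  have h := ((integrable_sq_mul_exp_neg_sq_div hV).div_const V).sub (integrable_exp_neg_sq_div hV)
  refine h.congr (ae_of_all _ fun u => ?_)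
  simp only [Pi.sub_apply]
  ring

lemma hasDerivAt_neg_mul_exp_neg_sq_div (hV : 0 < V) (u : ℝ) :
    HasDerivAt (fun u : ℝ => -(u * exp (-u ^ 2 / (2 * V))))
      (exp (-u ^ 2 / (2 * V)) * (u ^ 2 / V - 1)) u := by
  have h := ((hasDerivAt_id' u).fun_mul
    (((hasDerivAt_pow 2 u).fun_neg.div_const (2 * V)).exp)).fun_neg
  refine h.congr_deriv ?_
  field_simp
  ring

lemma integral_exp_neg_sq_div_mul_sq_div_sub_one (hV : 0 < V) :
    ∫ u : ℝ, exp (-u ^ 2 / (2 * V)) * (u ^ 2 / V - 1) = 0 :=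
  integral_eq_zero_of_hasDerivAt_of_integrable (hasDerivAt_neg_mul_exp_neg_sq_div hV)
    (integrable_exp_neg_sq_div_mul_sq_div_sub_one hV) (integrable_mul_exp_neg_sq_div hV).neg

end Gaussian

section Channel

variable {Y Z : Type*} [MeasurableSpace Y] [MeasurableSpace Z]

/-- `p y z` is the density, with respect to `μ`, of the output `y` given the input `z`. -/
structure IsChannelDensity (μ : Measure Y) (p : Y → Z → ℝ) : Prop where
  measurable : Measurable (Function.uncurry p)
  nonneg : ∀ y z, 0 ≤ p y z
  integrable : ∀ z, Integrable (fun y => p y z) μ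
  integral_eq_one : ∀ z, ∫ y, p y z ∂μ = 1

variable {μ : Measure Y} {ν : Measure Z} [SFinite μ] [SFinite ν] {p : Y → Z → ℝ} {f : Z → ℝ}

namespace IsChannelDensity

lemma integrable_uncurry_mul (hp : IsChannelDensity μ p) (hf : Integrable f ν) :
    Integrable (Function.uncurry fun y z => p y z * f z) (μ.prod ν) := by
  have hmeas : AEStronglyMeasurable (Function.uncurry fun y z => p y z * f z) (μ.prod ν) :=
    hp.measurable.aestronglyMeasurable.mul hf.aestronglyMeasurable.comp_snd
  refine (integrable_prod_iff' hmeas).2 ⟨ae_of_all _ fun z => (hp.integrable z).mul_const (f z),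
    hf.norm.congr (ae_of_all _ fun z => ?_)⟩
  simp only [Function.uncurry_apply_pair, norm_mul, Real.norm_of_nonneg (hp.nonneg _ z),
    integral_mul_const, hp.integral_eq_one z, one_mul]

lemma integrable_integral_mul (hp : IsChannelDensity μ p) (hf : Integrable f ν) :
    Integrable (fun y => ∫ z, p y z * f z ∂ν) μ :=
  (hp.integrable_uncurry_mul hf).integral_prod_left

lemma integral_integral_mul (hp : IsChannelDensity μ p) (hf : Integrable f ν) :
    ∫ y, ∫ z, p y z * f z ∂ν ∂μ = ∫ z, f z ∂ν := by
  rw [integral_integral_swap (hp.integrable_uncurry_mul hf)]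
  simp only [integral_mul_const, hp.integral_eq_one, one_mul]

end IsChannelDensity

end Channel

lemma HasDerivAt.div_const_mul_of_hasDerivAt {N D : ℝ → ℝ} {V A ω : ℝ} (hV : V ≠ 0)
    (hD : D ω ≠ 0) (hN : HasDerivAt N A ω) (hD' : HasDerivAt D (N ω / V) ω) :
    HasDerivAt (fun w => N w / (V * D w)) (A / (V * D ω) - (N ω / (V * D ω)) ^ 2) ω := by
  refine (hN.div (hD'.const_mul V) (mul_ne_zero hV hD)).congr_deriv ?_
  field_simp

lemma hasDerivAt_gout {p : ℝ → ℝ → ℝ} {ω y V A : ℝ} (hV : V ≠ 0)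
    (hD : ∫ z, p y z * exp (-(z - ω) ^ 2 / (2 * V)) ≠ 0)
    (hD' : HasDerivAt (fun w => ∫ z, p y z * exp (-(z - w) ^ 2 / (2 * V)))
      (∫ z, p y z * exp (-(z - ω) ^ 2 / (2 * V)) * ((z - ω) / V)) ω)
    (hN' : HasDerivAt (fun w => ∫ z, (z - w) * p y z * exp (-(z - w) ^ 2 / (2 * V))) A ω) :
    HasDerivAt (fun w => gout p w y V)
      (A / (V * ∫ z, p y z * exp (-(z - ω) ^ 2 / (2 * V))) - gout p ω y V ^ 2) ω := by
  have hD'' : HasDerivAt (fun w => ∫ z, p y z * exp (-(z - w) ^ 2 / (2 * V)))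
      ((∫ z, (z - ω) * p y z * exp (-(z - ω) ^ 2 / (2 * V))) / V) ω := by
    convert hD' using 1
    rw [← integral_div]
    congr 1 with z
    ring
  exact hN'.div_const_mul_of_hasDerivAt hV hD hD''

theorem output_nishimori_condition_general (p : ℝ → ℝ → ℝ) (hp : Measurable (Function.uncurry p))
    (hpnn : ∀ y z, 0 ≤ p y z) (ω V : ℝ) (hV : 0 < V)
    (hchan_int : ∀ z : ℝ, Integrable (fun y => p y z))
    (hchan : ∀ z : ℝ, ∫ y, p y z = 1)
    (q : ℝ → ℝ)
    (hq : ∀ y, q y = ∫ z, p y z *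
        ((Real.sqrt (2 * Real.pi * V))⁻¹ * Real.exp (-(z - ω) ^ 2 / (2 * V))))
    (hq_pos : ∀ y, 0 < q y)
    (hDUIden : ∀ (y ω' : ℝ),
      HasDerivAt (fun w => ∫ z, p y z * Real.exp (-(z - w) ^ 2 / (2 * V)))
        (∫ z, p y z * Real.exp (-(z - ω') ^ 2 / (2 * V)) * ((z - ω') / V)) ω')
    (hDUInum : ∀ (y ω' : ℝ),
      HasDerivAt (fun w => ∫ z, (z - w) * p y z * Real.exp (-(z - w) ^ 2 / (2 * V)))
        (∫ z, p y z * Real.exp (-(z - ω') ^ 2 / (2 * V)) * ((z - ω') ^ 2 / V - 1)) ω') :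
    ∫ y, (-(deriv (fun w => gout p w y V) ω)) * q y
      = ∫ y, (gout p ω y V) ^ 2 * q y := by
  have hchannel : IsChannelDensity volume p := ⟨hp, hpnn, hchan_int, hchan⟩
  set c := (sqrt (2 * π * V))⁻¹
  set f : ℝ → ℝ := fun z => exp (-(z - ω) ^ 2 / (2 * V)) * ((z - ω) ^ 2 / V - 1)
  have hf : Integrable f := (integrable_exp_neg_sq_div_mul_sq_div_sub_one hV).comp_sub_right ω
  have hqD : ∀ y, q y = c * ∫ z, p y z * exp (-(z - ω) ^ 2 / (2 * V)) := fun y => by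
    rw [hq y, ← integral_const_mul]
    congr 1 with z
    ring
  have hpoint : ∀ y, -deriv (fun w => gout p w y V) ω * q y
      = gout p ω y V ^ 2 * q y + -(c / V) * ∫ z, p y z * f z := fun y => by
    have hD := (pos_of_mul_pos_right (hqD y ▸ hq_pos y) (by positivity)).ne'
    rw [(hasDerivAt_gout hV.ne' hD (hDUIden y ω) (hDUInum y ω)).deriv, hqD y]
    simp only [f, ← mul_assoc]
    generalize (∫ z, p y z * exp (-(z - ω) ^ 2 / (2 * V))) = D at hD ⊢
    field_simp
    ring
  simp_rw [hpoint]
  refine integral_add_eq_of_integral_eq_zero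
    ((hchannel.integrable_integral_mul hf).const_mul _) ?_
  rw [integral_const_mul, hchannel.integral_integral_mul hf,
    integral_sub_right_eq_self (fun u => exp (-u ^ 2 / (2 * V)) * (u ^ 2 / V - 1)),
    integral_exp_neg_sq_div_mul_sq_div_sub_one hV, mul_zero]

/-- Output Nishimori condition: under the true data distribution with marginal density
`q(y) = ∫ p(y,z) φ_V(z-ω) dz`, the expectation of `−∂_ω g_out` equals the expectation of
`g_out²`:  `∫ (−∂_ω g_out(ω,y,V)) q(y) dy = ∫ g_out(ω,y,V)² q(y) dy`. -/
theorem output_nishimori_condition (p : ℝ → ℝ → ℝ) (hp : Measurable (Function.uncurry p))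
    (hpnn : ∀ y z, 0 ≤ p y z) (ω V : ℝ) (hV : 0 < V)
    (hchan_int : ∀ z : ℝ, Integrable (fun y => p y z))
    (hchan : ∀ z : ℝ, ∫ y, p y z = 1)
    (q : ℝ → ℝ)
    (hq : ∀ y, q y = ∫ z, p y z *
        ((Real.sqrt (2 * Real.pi * V))⁻¹ * Real.exp (-(z - ω) ^ 2 / (2 * V))))
    (hq_fin : ∀ y : ℝ, Integrable (fun z => p y z *
        ((Real.sqrt (2 * Real.pi * V))⁻¹ * Real.exp (-(z - ω) ^ 2 / (2 * V)))))
    (hq_pos : ∀ y, 0 < q y)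
    (hmom : ∀ (y ω' : ℝ),
      Integrable (fun z => (1 + |z| + z ^ 2) * (p y z * Real.exp (-(z - ω') ^ 2 / (2 * V)))))
    (hDUIden : ∀ (y ω' : ℝ),
      HasDerivAt (fun w => ∫ z, p y z * Real.exp (-(z - w) ^ 2 / (2 * V)))
        (∫ z, p y z * Real.exp (-(z - ω') ^ 2 / (2 * V)) * ((z - ω') / V)) ω')
    (hDUInum : ∀ (y ω' : ℝ),
      HasDerivAt (fun w => ∫ z, (z - w) * p y z * Real.exp (-(z - w) ^ 2 / (2 * V)))
        (∫ z, p y z * Real.exp (-(z - ω') ^ 2 / (2 * V)) * ((z - ω') ^ 2 / V - 1)) ω') :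
    ∫ y, (-(deriv (fun w => gout p w y V) ω)) * q y
      = ∫ y, (gout p ω y V) ^ 2 * q y :=
  output_nishimori_condition_general p hp hpnn ω V hV hchan_int hchan q hq hq_pos hDUIden hDUInum
end
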